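/- arXiv:1607.02081 — 6 statements merged into one kernel-verified Lean document; each statement's English description precedes it below -/
import Mathlib

section
/- Let N ≥ 3 be an integer, let p, q be primes satisfying condition (W), and let n be an integer with 1 ≤ n ≤ N. If x, y ∈ V_n are such that f_x(t) = f_y(t) for infinitely many values of t ∈ (0,∞), then x = y. -/
open Real

/-- The golden ratio `(1 + √5)/2`. -/
noncomputable def phiR : ℝ := (1 + Real.sqrt 5) / 2

/-- `mmax p q n = max(h_n·log p, h_{n-1}·log q)`, the logarithmic Mahler measure
of `p^{h_n}/q^{h_{n-1}}` for distinct primes `p`, `q`, where `h` is Fibonacci. -/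
noncomputable def mmax (p q n : ℕ) : ℝ :=
  max ((Nat.fib n : ℝ) * Real.log p) ((Nat.fib (n - 1) : ℝ) * Real.log q)

/-- `gmax n = max(h_n, φ·h_{n-1})`. -/
noncomputable def gmax (n : ℕ) : ℝ :=
  max (Nat.fib n : ℝ) (phiR * (Nat.fib (n - 1) : ℝ))

/-- The equation defining `t_n(p,q)`:
`m(p^{h_n}/q^{h_{n-1}})^t = m(p^{h_{n-1}}/q^{h_{n-2}})^t + m(p^{h_{n-2}}/q^{h_{n-3}})^t`. -/
def peq (p q n : ℕ) (t : ℝ) : Prop :=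
  mmax p q n ^ t = mmax p q (n - 1) ^ t + mmax p q (n - 2) ^ t

/-- The equation defining `s_n`:
`max(h_n, φ h_{n-1})^t = max(h_{n-1}, φ h_{n-2})^t + max(h_{n-2}, φ h_{n-3})^t`. -/
def geq (n : ℕ) (t : ℝ) : Prop :=
  gmax n ^ t = gmax (n - 1) ^ t + gmax (n - 2) ^ t

/-- Condition (W) on a pair of primes `(p,q)` relative to `N`. -/
def CondW (N p q : ℕ) : Prop :=
  ((Nat.fib N : ℝ) / Nat.fib (N - 1) < Real.log q / Real.log p ∧
    Real.log q / Real.log p < (Nat.fib (N - 1) : ℝ) / Nat.fib (N - 2)) ∨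
  ((Nat.fib (N - 1) : ℝ) / Nat.fib (N - 2) < Real.log q / Real.log p ∧
    Real.log q / Real.log p < (Nat.fib N : ℝ) / Nat.fib (N - 1))

/-- `V_n`: vectors `x ∈ ℕ^N` (1-based entry `i` is `x ⟨i-1⟩`) with
`Σ x_i h_i = h_n` and `Σ x_i h_{i-1} = h_{n-1}`. -/
def Vset (N n : ℕ) : Set (Fin N → ℕ) :=
  {x | ∑ i, x i * Nat.fib ((i : ℕ) + 1) = Nat.fib n ∧
       ∑ i, x i * Nat.fib (i : ℕ) = Nat.fib (n - 1)}

/-- The measure function `f_x(t) = (Σ_{i=1}^N x_i·max(h_i log p, h_{i-1} log q)^t)^{1/t}`. -/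
noncomputable def fmeas (N p q : ℕ) (x : Fin N → ℕ) (t : ℝ) : ℝ :=
  (∑ i, (x i : ℝ) * mmax p q ((i : ℕ) + 1) ^ t) ^ (1 / t)

/-- `x_n(i)`: the vector whose (i−2)nd (1-based) entry is `h_{n+1−i}`, whose
(i−1)st entry is `h_{n+2−i}`, and whose other entries are 0.  (For `i = 2`, `n = 1`
this gives `x_1(2) = (1,0,…,0)`.) -/
def xvec (N n i : ℕ) : Fin N → ℕ := fun j =>
  if (j : ℕ) + 3 = i then Nat.fib (n + 1 - i)
  else if (j : ℕ) + 2 = i then Nat.fib (n + 2 - i)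
  else 0

/-- `S_n = {x_n(i) : 3 ≤ i ≤ n+1}` for `n ≥ 2`, and `S_1 = {x_1(2)}`. -/
def Sset (N n : ℕ) : Set (Fin N → ℕ) :=
  if n = 1 then {xvec N 1 2}
  else {x | ∃ i, 3 ≤ i ∧ i ≤ n + 1 ∧ x = xvec N n i}

/-- `z` is almost consecutive-free: `z_j·z_{j+1} ≠ 0` implies `z_i = 0` for all `i > j+1`. -/
def ACF (N : ℕ) (z : Fin N → ℕ) : Prop :=
  ∀ (j : Fin N) (hj : (j : ℕ) + 1 < N),
    z j * z ⟨(j : ℕ) + 1, hj⟩ ≠ 0 → ∀ i : Fin N, (j : ℕ) + 1 < (i : ℕ) → z i = 0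

/-- `C_n`: the almost consecutive-free elements of `V_n`. -/
def Cset (N n : ℕ) : Set (Fin N → ℕ) := {z ∈ Vset N n | ACF N z}

/-- A factorization of `z ∈ V_n`: a `K`-tuple `x` with `x k ∈ V_{idx k}`,
`1 ≤ idx k ≤ n`, and `z = Σ_k x k`. -/
def IsFactorization (N n : ℕ) (z : Fin N → ℕ) {K : ℕ}
    (idx : Fin K → ℕ) (x : Fin K → Fin N → ℕ) : Prop :=
  (∀ k, 1 ≤ idx k ∧ idx k ≤ n ∧ x k ∈ Vset N (idx k)) ∧ z = ∑ k, x k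

/-- A tuple is `S`-type if each component lies in `∪_{i=1}^n S_i`. -/
def STypeFac (N n : ℕ) {K : ℕ} (x : Fin K → Fin N → ℕ) : Prop :=
  ∀ k, ∃ i, 1 ≤ i ∧ i ≤ n ∧ x k ∈ Sset N i

/-- `z` is `S`-restricted: every non-trivial (i.e. `K ≠ 1`) factorization is `S`-type. -/
def SRestricted (N n : ℕ) (z : Fin N → ℕ) : Prop :=
  ∀ (K : ℕ) (idx : Fin K → ℕ) (x : Fin K → Fin N → ℕ),
    IsFactorization N n z idx x → K ≠ 1 → STypeFac N n x

/-- `R_n`: the `S`-restricted elements of `C_n`. -/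
def Rset (N n : ℕ) : Set (Fin N → ℕ) := {z ∈ Cset N n | SRestricted N n z}

/-- The infimum attaining set `U_x = {t > 0 : f_x(t) = min{f_y(t) : y ∈ V_j}}`. -/
def Uset (N p q j : ℕ) (x : Fin N → ℕ) : Set ℝ :=
  {t | 0 < t ∧ IsLeast ((fun y => fmeas N p q y t) '' Vset N j) (fmeas N p q x t)}

/-- The shift map `λ((x_1,…,x_N)) = (0,x_1,…,x_{N-1})`. -/
def shiftMap (N : ℕ) (x : Fin N → ℕ) : Fin N → ℕ := fun j =>
  if (j : ℕ) = 0 then 0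
  else x ⟨(j : ℕ) - 1, lt_of_le_of_lt (Nat.sub_le _ _) j.isLt⟩

/-!
With `b_i = max(h_i log p, h_{i-1} log q)`, the identity `f_x(t) = f_y(t)` says
`∑ (x_i - y_i) exp(t log b_i) = 0`. Condition (W) forces `log p < log q < 2 log p`, which makes
`b_1 < b_2 < ⋯ < b_N`, so this is an exponential sum with distinct exponents. Such a sum has only
finitely many zeros unless all its coefficients vanish: zeros accumulating at a finite point kill
the analytic function, and zeros going to infinity kill the coefficient of the largest exponent.
-/

open Filter Topology

section ExpSum

variable {ι : Type*} [Fintype ι] {L : ι → ℝ} {c : ι → ℝ} {S : Set ℝ}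

/-- Divided by the exponential of the largest exponent with nonzero coefficient, the sum tends
to that coefficient as `t → ∞`, so it cannot vanish on an unbounded set unless all coefficients
vanish. -/
lemma coeff_eq_zero_of_sum_mul_exp_eq_zero_of_not_bddAbove (hL : Function.Injective L)
    (hS : ¬ BddAbove S) (hz : ∀ t ∈ S, ∑ i, c i * Real.exp (L i * t) = 0) (i : ι) :
    c i = 0 := by
  classical
  by_contra hi
  obtain ⟨j, hjc, hmax⟩ := (Finset.univ.filter (c · ≠ 0)).exists_max_image L
    ⟨i, by simpa using hi⟩
  simp only [Finset.mem_filter, Finset.mem_univ, true_and] at hjc hmax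
  set g : ℝ → ℝ := fun t => ∑ i, c i * Real.exp ((L i - L j) * t)
  have hg_tendsto : Tendsto g atTop (𝓝 (∑ i, if i = j then c j else 0)) := by
    refine tendsto_finsetSum _ fun i _ => ?_
    by_cases hij : i = j
    · subst hij
      simp
    by_cases hci : c i = 0
    · simp [hij, hci]
    have hlt : L i - L j < 0 := sub_neg.mpr ((hmax i hci).lt_of_ne fun e => hij (hL e))
    simpa [hij] using
      (Real.tendsto_exp_atBot.comp (tendsto_id.const_mul_atTop_of_neg hlt)).const_mul (c i)
  have hg_zero : ∃ᶠ t in atTop, g t = 0 := by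
    refine frequently_atTop.mpr fun a => ?_
    obtain ⟨t, htS, hat⟩ := not_bddAbove_iff.mp hS a
    refine ⟨t, hat.le, ?_⟩
    have hdiv : g t = (∑ i, c i * Real.exp (L i * t)) / Real.exp (L j * t) := by
      rw [Finset.sum_div]
      refine Finset.sum_congr rfl fun i _ => ?_
      rw [mul_div_assoc, ← Real.exp_sub, sub_mul]
    rw [hdiv, hz t htS, zero_div]
  simp only [Finset.sum_ite_eq', Finset.mem_univ, if_true] at hg_tendsto
  exact hjc (tendsto_nhds_unique_of_frequently_eq hg_tendsto tendsto_const_nhds hg_zero)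

/-- On a bounded set the zeros accumulate, so the analytic sum vanishes everywhere; an unbounded
set is unbounded above, or unbounded below and then reflected. -/
lemma coeff_eq_zero_of_sum_mul_exp_eq_zero_of_infinite (hL : Function.Injective L)
    (hS : S.Infinite) (hz : ∀ t ∈ S, ∑ i, c i * Real.exp (L i * t) = 0) (i : ι) :
    c i = 0 := by
  by_cases hup : BddAbove S
  · by_cases hlow : BddBelow S
    · obtain ⟨b, hb⟩ := hup
      obtain ⟨a, ha⟩ := hlow
      obtain ⟨z, -, hacc⟩ := hS.exists_accPt_of_subset_isCompact (isCompact_Icc (a := a) (b := b))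
        fun t ht => ⟨ha ht, hb ht⟩
      have hanalytic : AnalyticOnNhd ℝ (fun t => ∑ i, c i * Real.exp (L i * t)) Set.univ :=
        Finset.analyticOnNhd_fun_sum _ fun i _ =>
          analyticOnNhd_const.mul (analyticOnNhd_const.mul analyticOnNhd_id).rexp
      have hfreq : ∃ᶠ t in 𝓝[≠] z, ∑ i, c i * Real.exp (L i * t) = 0 :=
        (accPt_iff_frequently_nhdsNE.mp hacc).mono fun t ht => hz t ht
      have hzero := hanalytic.eqOn_zero_of_preconnected_of_frequently_eq_zero isPreconnected_univ
        (Set.mem_univ z) hfreq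
      exact coeff_eq_zero_of_sum_mul_exp_eq_zero_of_not_bddAbove hL not_bddAbove_univ
        (fun t _ => hzero (Set.mem_univ t)) i
    · refine coeff_eq_zero_of_sum_mul_exp_eq_zero_of_not_bddAbove (L := fun i => -L i)
        (neg_injective.comp hL) (S := -S) (by rwa [bddAbove_neg]) (fun t ht => ?_) i
      simpa only [neg_mul_comm] using hz (-t) ht
  · exact coeff_eq_zero_of_sum_mul_exp_eq_zero_of_not_bddAbove hL hup hz i

end ExpSum

lemma fib_succ_div_fib_mem_Icc {n : ℕ} (hn : 1 ≤ n) :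
    (Nat.fib (n + 1) : ℝ) / Nat.fib n ∈ Set.Icc 1 2 := by
  obtain ⟨m, rfl⟩ := Nat.exists_eq_add_of_le' hn
  have hpos : (0 : ℝ) < Nat.fib (m + 1) := by exact_mod_cast Nat.fib_pos.mpr m.succ_pos
  have hle : (Nat.fib m : ℝ) ≤ Nat.fib (m + 1) := by exact_mod_cast Nat.fib_mono m.le_succ
  have hadd : (Nat.fib (m + 2) : ℝ) = Nat.fib m + Nat.fib (m + 1) := by
    exact_mod_cast Nat.fib_add_two
  rw [Set.mem_Icc, le_div_iff₀ hpos, div_le_iff₀ hpos, hadd]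
  constructor <;> linarith [(Nat.fib m).cast_nonneg (α := ℝ)]

/-- Under (W), `log q / log p` lies strictly between two consecutive ratios `h_{k+1}/h_k`
with `k ≥ 1`, all of which lie in `[1, 2]`. -/
lemma CondW.log_bounds {N p q : ℕ} (hN : 3 ≤ N) (hW : CondW N p q) :
    0 < Real.log p ∧ Real.log p < Real.log q ∧ Real.log q < 2 * Real.log p := by
  obtain ⟨k, rfl⟩ := Nat.exists_eq_add_of_le' hN
  obtain ⟨hA1, hA2⟩ : (Nat.fib (k + 3) : ℝ) / Nat.fib (k + 2) ∈ Set.Icc 1 2 :=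
    fib_succ_div_fib_mem_Icc (by omega)
  obtain ⟨hB1, hB2⟩ : (Nat.fib (k + 2) : ℝ) / Nat.fib (k + 1) ∈ Set.Icc 1 2 :=
    fib_succ_div_fib_mem_Icc (by omega)
  have hratio : 1 < Real.log q / Real.log p ∧ Real.log q / Real.log p < 2 := by
    simp only [CondW, show k + 3 - 1 = k + 2 by omega, show k + 3 - 2 = k + 1 by omega] at hW
    rcases hW with ⟨h1, h2⟩ | ⟨h1, h2⟩ <;> constructor <;> linarith
  have hp : 0 < Real.log p := (Real.log_natCast_nonneg p).lt_of_ne' fun h => by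
    norm_num [h] at hratio
  rw [one_lt_div hp, div_lt_iff₀ hp] at hratio
  exact ⟨hp, hratio.1, by linarith⟩

lemma mmax_lt_mmax_succ {p q : ℕ} (hp : 0 < Real.log p) (hpq : Real.log p < Real.log q)
    (hqp : Real.log q < 2 * Real.log p) (j : ℕ) : mmax p q (j + 1) < mmax p q (j + 2) := by
  have hfib : (0 : ℝ) < Nat.fib (j + 1) := by exact_mod_cast Nat.fib_pos.mpr j.succ_pos
  have hfib_le : (Nat.fib j : ℝ) ≤ Nat.fib (j + 1) := by exact_mod_cast Nat.fib_mono j.le_succ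
  have hfib_add : (Nat.fib (j + 2) : ℝ) = Nat.fib j + Nat.fib (j + 1) := by
    exact_mod_cast Nat.fib_add_two
  simp only [mmax, Nat.add_sub_cancel, show j + 2 - 1 = j + 1 from rfl]
  -- `h_{j+1} log p < h_{j+1} log q` and `h_j log q < 2 h_j log p ≤ h_{j+2} log p`
  refine max_lt (lt_max_of_lt_right (by gcongr)) (lt_max_of_lt_left ?_)
  rcases Nat.eq_zero_or_pos j with rfl | hj
  · simpa using hp
  have : (1 : ℝ) ≤ Nat.fib j := by exact_mod_cast Nat.fib_pos.mpr hj
  nlinarith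

lemma strictMono_mmax_succ {p q : ℕ} (hp : 0 < Real.log p) (hpq : Real.log p < Real.log q)
    (hqp : Real.log q < 2 * Real.log p) : StrictMono fun j => mmax p q (j + 1) :=
  strictMono_nat_of_lt_succ (mmax_lt_mmax_succ hp hpq hqp)

lemma sum_sub_mul_exp_eq_zero_of_fmeas_eq {N p q : ℕ} {x y : Fin N → ℕ} {t : ℝ}
    (hpos : ∀ i : Fin N, 0 < mmax p q (i + 1)) (ht : t ≠ 0)
    (h : fmeas N p q x t = fmeas N p q y t) :
    ∑ i, ((x i : ℝ) - y i) * Real.exp (Real.log (mmax p q (i + 1)) * t) = 0 := by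
  have hnonneg (z : Fin N → ℕ) : 0 ≤ ∑ i, (z i : ℝ) * mmax p q (i + 1) ^ t :=
    Finset.sum_nonneg fun i _ => by have := hpos i; positivity
  rw [fmeas, fmeas, Real.rpow_left_inj (hnonneg x) (hnonneg y) (one_div_ne_zero ht)] at h
  simp only [← Real.rpow_def_of_pos (hpos _), sub_mul, Finset.sum_sub_distrib, h, sub_self]

theorem stmt8_general (N p q : ℕ) (hN : 3 ≤ N) (hW : CondW N p q) (x y : Fin N → ℕ)
    (hinf : {t : ℝ | 0 < t ∧ fmeas N p q x t = fmeas N p q y t}.Infinite) :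
    x = y := by
  obtain ⟨hp, hpq, hqp⟩ := hW.log_bounds hN
  have hpos (i : Fin N) : 0 < mmax p q (i + 1) :=
    lt_max_of_lt_left (mul_pos (by exact_mod_cast Nat.fib_pos.mpr i.succ_pos) hp)
  have hinj : Function.Injective fun i : Fin N => Real.log (mmax p q (i + 1)) :=
    fun i j h => Fin.val_injective <| (strictMono_mmax_succ hp hpq hqp).injective <|
      Real.log_injOn_pos (hpos i) (hpos j) h
  have hcoeff := coeff_eq_zero_of_sum_mul_exp_eq_zero_of_infinite hinj hinf
    fun t ht => sum_sub_mul_exp_eq_zero_of_fmeas_eq hpos ht.1.ne' ht.2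
  funext i
  exact_mod_cast sub_eq_zero.mp (hcoeff i)

/-- Lemma `MeasureFunctionsSwitch`: for `N ≥ 3`, primes `p, q` satisfying (W)
and `1 ≤ n ≤ N`, if `x, y ∈ V_n` have `f_x(t) = f_y(t)` for infinitely many `t ∈ (0,∞)`,
then `x = y`. -/
theorem stmt8 (N p q n : ℕ) (hN : 3 ≤ N) (hp : p.Prime) (hq : q.Prime) (hW : CondW N p q)
    (h1n : 1 ≤ n) (hnN : n ≤ N) (x y : Fin N → ℕ)
    (hx : x ∈ Vset N n) (hy : y ∈ Vset N n)
    (hinf : {t : ℝ | 0 < t ∧ fmeas N p q x t = fmeas N p q y t}.Infinite) :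
    x = y :=
  stmt8_general N p q hN hW x y hinf
end

section
/- Let N ≥ 3 and let i be an integer with 1 ≤ i ≤ N, and suppose z = (z_1,…,z_N) ∈ V_i. If there exists an integer j with 2 ≤ j ≤ i such that z_ℓ = 0 for all ℓ ∉ {j−1, j}, then z = x_i(j+1); in particular z ∈ S_i. -/
open Real

/-! A vector of `V_i` supported on the entries `j - 1, j` is determined by these two entries
`(a, b)`, which satisfy `a h_{j-1} + b h_j = h_i` and `a h_{j-2} + b h_{j-1} = h_{i-1}`. The
coefficient matrix is unimodular (Cassini), so this system has at most one solution, and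
`(h_{i-j}, h_{i-j+1})` is one by the addition formula `h_{m+k+1} = h_m h_k + h_{m+1} h_{k+1}`. -/

namespace Nat

theorem fib_pair_injective (k : ℕ) :
    Function.Injective fun p : ℕ × ℕ =>
      (p.1 * fib k + p.2 * fib (k + 1), p.1 * fib (k + 1) + p.2 * fib (k + 2)) := by
  induction k with
  | zero =>
    rintro ⟨a, b⟩ ⟨c, d⟩ h
    simp only [fib_zero, fib_one, fib_two, mul_zero, mul_one, zero_add, Prod.mk.injEq] at h
    ext <;> omega
  | succ k ih =>
    -- raising `k` by one amounts to substituting `(b, a + b)` for `(a, b)`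
    rintro ⟨a, b⟩ ⟨c, d⟩ h
    have key := @ih (b, a + b) (d, c + d) (by
      simp only [fib_add_two, Prod.mk.injEq] at h ⊢
      constructor <;> linarith [h.1, h.2])
    simp only [Prod.mk.injEq] at key ⊢
    omega

end Nat

section TwoEntries

variable {N : ℕ} (k : ℕ)

theorem mem_Vset_iff_of_eq_zero (hk : k + 1 < N) {z : Fin N → ℕ}
    (hz : ∀ ℓ : Fin N, (ℓ : ℕ) ≠ k → (ℓ : ℕ) ≠ k + 1 → z ℓ = 0) (n : ℕ) :
    z ∈ Vset N n ↔
      z ⟨k, by omega⟩ * Nat.fib (k + 1) + z ⟨k + 1, hk⟩ * Nat.fib (k + 2) = Nat.fib n ∧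
      z ⟨k, by omega⟩ * Nat.fib k + z ⟨k + 1, hk⟩ * Nat.fib (k + 1) = Nat.fib (n - 1) := by
  have hsum (w : ℕ → ℕ) :
      ∑ ℓ : Fin N, z ℓ * w ℓ = z ⟨k, by omega⟩ * w k + z ⟨k + 1, hk⟩ * w (k + 1) :=
    Finset.sum_eq_add_of_mem _ _ (Finset.mem_univ _) (Finset.mem_univ _)
      (by simp [Fin.ext_iff]) fun ℓ _ hℓ => by
        rw [hz ℓ (by simpa [Fin.ext_iff] using hℓ.1) (by simpa [Fin.ext_iff] using hℓ.2), zero_mul]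
  rw [Vset, Set.mem_ofPred_eq, hsum fun m => Nat.fib (m + 1), hsum Nat.fib]

theorem eq_of_mem_Vset_of_eq_zero (hk : k + 1 < N) {n : ℕ} {z w : Fin N → ℕ}
    (hzV : z ∈ Vset N n) (hwV : w ∈ Vset N n)
    (hz : ∀ ℓ : Fin N, (ℓ : ℕ) ≠ k → (ℓ : ℕ) ≠ k + 1 → z ℓ = 0)
    (hw : ∀ ℓ : Fin N, (ℓ : ℕ) ≠ k → (ℓ : ℕ) ≠ k + 1 → w ℓ = 0) : z = w := by
  rw [mem_Vset_iff_of_eq_zero k hk hz] at hzV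
  rw [mem_Vset_iff_of_eq_zero k hk hw] at hwV
  have hpair := @Nat.fib_pair_injective k (z ⟨k, by omega⟩, z ⟨k + 1, hk⟩)
    (w ⟨k, by omega⟩, w ⟨k + 1, hk⟩) (by simp only [hzV, hwV])
  simp only [Prod.mk.injEq] at hpair
  funext ℓ
  by_cases hℓk : (ℓ : ℕ) = k
  · simpa [← hℓk] using hpair.1
  by_cases hℓk' : (ℓ : ℕ) = k + 1
  · simpa [← hℓk'] using hpair.2
  rw [hz ℓ hℓk hℓk', hw ℓ hℓk hℓk']

theorem xvec_eq_zero (n : ℕ) (ℓ : Fin N) (hℓk : (ℓ : ℕ) ≠ k) (hℓk' : (ℓ : ℕ) ≠ k + 1) :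
    xvec N n (k + 3) ℓ = 0 := by
  simp only [xvec]
  rw [if_neg (by omega), if_neg (by omega)]

theorem xvec_mem_Vset (hk : k + 1 < N) {n : ℕ} (hkn : k + 2 ≤ n) :
    xvec N n (k + 3) ∈ Vset N n := by
  obtain ⟨m, rfl⟩ : ∃ m, n = m + k + 2 := ⟨n - k - 2, by omega⟩
  rw [mem_Vset_iff_of_eq_zero k hk (xvec_eq_zero k _)]
  simp only [xvec, if_neg (show ¬ k + 1 + 3 = k + 3 by omega),
    show k + 1 + 2 = k + 3 by omega]
  rw [show m + k + 2 + 1 - (k + 3) = m by omega, show m + k + 2 + 2 - (k + 3) = m + 1 by omega,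
    show m + k + 2 = m + (k + 1) + 1 by omega, show m + (k + 1) + 1 - 1 = m + k + 1 by omega]
  exact ⟨(Nat.fib_add m (k + 1)).symm, (Nat.fib_add m k).symm⟩

end TwoEntries

theorem stmt9_general (N i : ℕ) (hiN : i ≤ N)
    (z : Fin N → ℕ) (hz : z ∈ Vset N i)
    (j : ℕ) (h2j : 2 ≤ j) (hji : j ≤ i)
    (hzero : ∀ ℓ : Fin N, (ℓ : ℕ) + 1 ≠ j - 1 → (ℓ : ℕ) + 1 ≠ j → z ℓ = 0) :
    z = xvec N i (j + 1) ∧ z ∈ Sset N i := by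
  obtain ⟨k, rfl⟩ : ∃ k, j = k + 2 := ⟨j - 2, by omega⟩
  have hk : k + 1 < N := by omega
  have hz_eq : z = xvec N i (k + 3) :=
    eq_of_mem_Vset_of_eq_zero k hk hz (xvec_mem_Vset k hk (by omega))
      (fun ℓ hℓk hℓk' => hzero ℓ (by omega) (by omega)) (xvec_eq_zero k i)
  refine ⟨hz_eq, ?_⟩
  rw [Sset, if_neg (by omega)]
  exact ⟨k + 3, by omega, by omega, hz_eq⟩

/-- Lemma `SEquals`: for `N ≥ 3`, `1 ≤ i ≤ N` and `z ∈ V_i`, if there is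
`2 ≤ j ≤ i` with `z_ℓ = 0` (1-based entries) for all `ℓ ∉ {j-1, j}`, then `z = x_i(j+1)`;
in particular `z ∈ S_i`. -/
theorem stmt9 (N i : ℕ) (hN : 3 ≤ N) (h1i : 1 ≤ i) (hiN : i ≤ N)
    (z : Fin N → ℕ) (hz : z ∈ Vset N i)
    (j : ℕ) (h2j : 2 ≤ j) (hji : j ≤ i)
    (hzero : ∀ ℓ : Fin N, (ℓ : ℕ) + 1 ≠ j - 1 → (ℓ : ℕ) + 1 ≠ j → z ℓ = 0) :
    z = xvec N i (j + 1) ∧ z ∈ Sset N i :=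
  stmt9_general N i hiN z hz j h2j hji hzero
end

section
/- Let N ≥ 3 and let n be an integer with 1 ≤ n ≤ N. Then S_n ⊆ R_n ⊆ C_n ⊆ V_n. -/
open Real

/-! Every element of `S_n` is supported on two consecutive positions `p, p + 1`, hence almost
consecutive-free, and so is every summand of a factorization of it. For a vector
`a e_p + b e_{p+1}`, membership in `V_m` is a linear system in `(a, b)` whose determinant is `±1`
by Cassini's identity, so it has at most one solution: `(1, 0)` if `m = p + 1`,
`(h_k, h_{k+1})` if `m = p + k + 2`, and none for `m ≤ p`. Both solutions are elements of
`S_m`. -/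

namespace Nat

theorem fib_add_two_mul_fib_sub_fib_add_one_sq (p : ℕ) :
    (fib (p + 2) * fib p - fib (p + 1) ^ 2 : ℤ) = (-1) ^ (p + 1) := by
  have h := Int.fib_succ_mul_fib_pred_sub_fib_sq ((p + 1 : ℕ) : ℤ)
  rw [Int.natAbs_natCast] at h
  simpa [← Int.fib_natCast, add_assoc] using h

theorem fib_pair_injective_s10 {p a b a' b' : ℕ}
    (h₁ : a * fib (p + 1) + b * fib (p + 2) = a' * fib (p + 1) + b' * fib (p + 2))
    (h₀ : a * fib p + b * fib (p + 1) = a' * fib p + b' * fib (p + 1)) :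
    a = a' ∧ b = b' := by
  have hD : (fib (p + 2) * fib p - fib (p + 1) ^ 2 : ℤ) ≠ 0 := by
    rw [fib_add_two_mul_fib_sub_fib_add_one_sq]; exact pow_ne_zero _ (by norm_num)
  have H₁ : (a * fib (p + 1) + b * fib (p + 2) : ℤ) = a' * fib (p + 1) + b' * fib (p + 2) := by
    exact_mod_cast h₁
  have H₀ : (a * fib p + b * fib (p + 1) : ℤ) = a' * fib p + b' * fib (p + 1) := by
    exact_mod_cast h₀
  constructor
  · have := mul_right_cancel₀ hD (a := (a : ℤ)) (c := a') <| by
      linear_combination (fib (p + 2) : ℤ) * H₀ - (fib (p + 1) : ℤ) * H₁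
    exact_mod_cast this
  · have := mul_right_cancel₀ hD (a := (b : ℤ)) (c := b') <| by
      linear_combination (fib p : ℤ) * H₁ - (fib (p + 1) : ℤ) * H₀
    exact_mod_cast this

theorem fib_pair_of_add (p k : ℕ) :
    fib k * fib (p + 1) + fib (k + 1) * fib (p + 2) = fib (p + k + 2) ∧
      fib k * fib p + fib (k + 1) * fib (p + 1) = fib (p + k + 2 - 1) := by
  rw [show p + k + 2 = k + (p + 1) + 1 by ring, show k + (p + 1) + 1 - 1 = k + p + 1 by omega]
  exact ⟨(fib_add k (p + 1)).symm, (fib_add k p).symm⟩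

theorem fib_pair_cases {p m a b : ℕ} (hm : 1 ≤ m)
    (h₁ : a * fib (p + 1) + b * fib (p + 2) = fib m)
    (h₀ : a * fib p + b * fib (p + 1) = fib (m - 1)) :
    (m = p + 1 ∧ a = 1 ∧ b = 0) ∨ ∃ k, m = p + k + 2 ∧ a = fib k ∧ b = fib (k + 1) := by
  rcases le_or_gt m p with hmp | hpm
  · -- summing the equations writes `fib (m + 1) < fib (p + 2)` with weights `≥ fib (p + 2)`
    exfalso
    obtain ⟨l, rfl⟩ := Nat.exists_eq_add_of_le' hm
    have hsum : a * fib (p + 2) + b * fib (p + 3) = fib (l + 2) := by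
      rw [add_tsub_cancel_right] at h₀
      rw [fib_add_two, fib_add_two (n := p + 1), fib_add_two (n := l), ← h₁, ← h₀]
      ring
    have hlt : fib (l + 2) < fib (p + 2) := fib_add_two_strictMono (by omega)
    have hle : fib (p + 2) ≤ fib (p + 3) := fib_le_fib_succ
    have hpos : 0 < fib (l + 1) := fib_pos.2 hm
    rcases a.eq_zero_or_pos with rfl | ha
    · rcases b.eq_zero_or_pos with rfl | hb
      · simp only [zero_mul, add_zero] at h₁
        omega
      · nlinarith
    · nlinarith
  rcases (by omega : m = p + 1 ∨ p + 2 ≤ m) with rfl | hpm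
  · left
    exact ⟨rfl, fib_pair_injective_s10 (a' := 1) (b' := 0) (by simpa using h₁)
      (by simpa using h₀)⟩
  · right
    obtain ⟨k, rfl⟩ : ∃ k, m = p + k + 2 := ⟨m - p - 2, by omega⟩
    exact ⟨k, rfl, fib_pair_injective_s10 (h₁.trans (fib_pair_of_add p k).1.symm)
      (h₀.trans (fib_pair_of_add p k).2.symm)⟩

end Nat

def pairVec (N p a b : ℕ) : Fin N → ℕ := fun j =>
  if (j : ℕ) = p then a else if (j : ℕ) = p + 1 then b else 0

section pairVec

variable {N p a b : ℕ}

theorem sum_pairVec_mul (hp : p + 1 < N) (g : ℕ → ℕ) :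
    ∑ j : Fin N, pairVec N p a b j * g j = a * g p + b * g (p + 1) := by
  rw [Finset.sum_eq_add (⟨p, by omega⟩ : Fin N) ⟨p + 1, hp⟩ (by simp [Fin.ext_iff])]
  · simp [pairVec]
  · intro j _ hj
    simp only [ne_eq, Fin.ext_iff] at hj
    simp [pairVec, hj.1, hj.2]
  all_goals simp

theorem pairVec_mem_Vset_iff (hp : p + 1 < N) {m : ℕ} :
    pairVec N p a b ∈ Vset N m ↔
      a * Nat.fib (p + 1) + b * Nat.fib (p + 2) = Nat.fib m ∧
        a * Nat.fib p + b * Nat.fib (p + 1) = Nat.fib (m - 1) := by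
  simp only [Vset, Set.mem_ofPred_eq, sum_pairVec_mul hp (fun j => Nat.fib (j + 1)),
    sum_pairVec_mul hp Nat.fib]

theorem pairVec_ACF : ACF N (pairVec N p a b) := by
  intro j hj hne i hi
  simp only [pairVec] at hne ⊢
  split_ifs at hne ⊢ <;> first | rfl | omega

theorem exists_eq_pairVec_of_le (hp : p + 1 < N) {y : Fin N → ℕ} (hy : y ≤ pairVec N p a b) :
    ∃ a' b', y = pairVec N p a' b' := by
  refine ⟨y ⟨p, by omega⟩, y ⟨p + 1, hp⟩, funext fun j => ?_⟩
  have hyj := hy j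
  simp only [pairVec] at hyj ⊢
  split_ifs at hyj ⊢ with h₁ h₂
  · exact congrArg y (Fin.ext h₁)
  · exact congrArg y (Fin.ext h₂)
  · omega

theorem xvec_eq_pairVec (k : ℕ) :
    xvec N (p + k + 2) (p + 3) = pairVec N p (Nat.fib k) (Nat.fib (k + 1)) := by
  funext j
  simp only [xvec, pairVec]
  split_ifs <;> first | omega | (congr 1; omega)

theorem xvec_succ_eq_pairVec : xvec N (p + 1) (p + 2) = pairVec N p 1 0 := by
  funext j
  simp only [xvec, pairVec]
  split_ifs <;> first | omega | simp [show p + 1 + 2 - (p + 2) = 1 by omega]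

theorem xvec_mem_Sset {n i : ℕ} (hi : 3 ≤ i) (hin : i ≤ n + 1) : xvec N n i ∈ Sset N n := by
  rw [Sset, if_neg (by omega)]
  exact ⟨i, hi, hin, rfl⟩

theorem pairVec_mem_Sset (hp : p + 1 < N) {m : ℕ} (hm : 1 ≤ m)
    (h : pairVec N p a b ∈ Vset N m) : pairVec N p a b ∈ Sset N m := by
  rw [pairVec_mem_Vset_iff hp] at h
  rcases Nat.fib_pair_cases hm h.1 h.2 with ⟨rfl, rfl, rfl⟩ | ⟨k, rfl, rfl, rfl⟩
  · rw [← xvec_succ_eq_pairVec]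
    rcases p.eq_zero_or_pos with rfl | hp₀
    · simp [Sset]
    · exact xvec_mem_Sset (by omega) (by omega)
  · rw [← xvec_eq_pairVec]
    exact xvec_mem_Sset (by omega) (by omega)

theorem exists_pairVec_of_mem_Sset (hN : 2 ≤ N) {n : ℕ} (hnN : n ≤ N) {z : Fin N → ℕ}
    (hz : z ∈ Sset N n) : ∃ p a b, p + 1 < N ∧ z = pairVec N p a b ∧ z ∈ Vset N n := by
  unfold Sset at hz
  split_ifs at hz with hn
  · subst hn
    rw [Set.mem_singleton_iff] at hz
    subst hz
    refine ⟨0, 1, 0, by omega, xvec_succ_eq_pairVec, ?_⟩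
    rw [xvec_succ_eq_pairVec, pairVec_mem_Vset_iff (by omega)]
    simp
  · obtain ⟨i, hi, hin, rfl⟩ := hz
    obtain ⟨p, rfl⟩ := Nat.exists_eq_add_of_le' hi
    obtain ⟨k, rfl⟩ : ∃ k, n = p + k + 2 := ⟨n - p - 2, by omega⟩
    refine ⟨p, _, _, by omega, xvec_eq_pairVec k, ?_⟩
    rw [xvec_eq_pairVec, pairVec_mem_Vset_iff (by omega)]
    exact Nat.fib_pair_of_add p k

theorem pairVec_SRestricted (hp : p + 1 < N) {n : ℕ} : SRestricted N n (pairVec N p a b) := by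
  rintro K idx x ⟨hx, hsum⟩ - k
  obtain ⟨hm, hmn, hxk⟩ := hx k
  have hle : x k ≤ pairVec N p a b :=
    hsum ▸ Finset.single_le_sum (fun _ _ => zero_le) (Finset.mem_univ k)
  obtain ⟨a', b', hk⟩ := exists_eq_pairVec_of_le hp hle
  rw [hk] at hxk ⊢
  exact ⟨idx k, hm, hmn, pairVec_mem_Sset hp hm hxk⟩

end pairVec

theorem stmt10_general (N n : ℕ) (hN : 3 ≤ N) (hnN : n ≤ N) :
    Sset N n ⊆ Rset N n ∧ Rset N n ⊆ Cset N n ∧ Cset N n ⊆ Vset N n := by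
  refine ⟨fun z hz => ?_, fun z hz => hz.1, fun z hz => hz.1⟩
  obtain ⟨p, a, b, hp, rfl, hV⟩ := exists_pairVec_of_mem_Sset (by omega) hnN hz
  exact ⟨⟨hV, pairVec_ACF⟩, pairVec_SRestricted hp⟩

/-- set containments of Theorem `MainProgress`: for `N ≥ 3` and `1 ≤ n ≤ N`,
`S_n ⊆ R_n ⊆ C_n ⊆ V_n`. -/
theorem stmt10 (N n : ℕ) (hN : 3 ≤ N) (h1n : 1 ≤ n) (hnN : n ≤ N) :
    Sset N n ⊆ Rset N n ∧ Rset N n ⊆ Cset N n ∧ Cset N n ⊆ Vset N n :=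
  stmt10_general N n hN hnN
end

section
/- Let N ≥ 3 be an integer, let p, q be primes satisfying condition (W), and let n be an integer with 1 ≤ n ≤ N. Suppose X ⊆ Y ⊆ V_n and that for each z ∈ Y∖X the set {t ∈ (0,∞) : f_z(t) = min{f_x(t) : x ∈ V_n}} is finite. If min{f_x(t) : x ∈ Y} = min{f_x(t) : x ∈ V_n} for all t > 0, then for every t > 0 there exists x ∈ X with f_x(t) = min{f_y(t) : y ∈ V_n}; in particular min{f_x(t) : x ∈ X} = min{f_x(t) : x ∈ V_n} for all t > 0. -/
open Real

/-!
Each `z ∈ Y \ X` is a minimiser only at finitely many `t`, so off a finite set of `t` the minimum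
over `V_n` is attained in `X`. As `X` is finite, a single `x ∈ X` is a minimiser at points
accumulating at any given `t₀ > 0`; being a minimiser among finitely many functions continuous at
`t₀` is a closed condition, so `x` is a minimiser at `t₀` too.
-/

open Filter Topology

section Minimizers

variable {α β γ : Type*} [TopologicalSpace β] [LinearOrder γ] [TopologicalSpace γ]
  [OrderClosedTopology γ] {f : α → β → γ} {V X Y : Set α}

theorem exists_isLeast_of_frequently (hX : X.Finite) (hXV : X ⊆ V) {b : β}
    (hf : ∀ v ∈ V, ContinuousAt (f v) b)
    (h : ∃ᶠ c in 𝓝 b, ∃ x ∈ X, IsLeast ((f · c) '' V) (f x c)) :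
    ∃ x ∈ X, IsLeast ((f · b) '' V) (f x b) := by
  obtain ⟨x, hxX, hx⟩ := hX.frequently_exists.mp h
  refine ⟨x, hxX, Set.mem_image_of_mem _ (hXV hxX), ?_⟩
  rintro _ ⟨v, hv, rfl⟩
  have hle : ∃ᶠ c in 𝓝 b, f x c ≤ f v c := hx.mono fun c hc => hc.2 ⟨v, hv, rfl⟩
  exact ContinuousWithinAt.closure_le (mem_closure_iff_frequently.mpr hle)
    (hf x (hXV hxX)).continuousWithinAt (hf v hv).continuousWithinAt fun _ hc => hc

theorem exists_isLeast_of_finite_exceptions [T1Space β] [∀ b : β, NeBot (𝓝[≠] b)]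
    (hV : V.Finite) (hXY : X ⊆ Y) (hYV : Y ⊆ V) {s : Set β} (hs : IsOpen s)
    (hf : ∀ v ∈ V, ∀ b ∈ s, ContinuousAt (f v) b)
    (hfin : ∀ z ∈ Y \ X, {b ∈ s | IsLeast ((f · b) '' V) (f z b)}.Finite)
    (hY : ∀ b ∈ s, ∃ y ∈ Y, IsLeast ((f · b) '' V) (f y b)) :
    ∀ b ∈ s, ∃ x ∈ X, IsLeast ((f · b) '' V) (f x b) := by
  set F := ⋃ z ∈ Y \ X, {b ∈ s | IsLeast ((f · b) '' V) (f z b)}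
  have hF : F.Finite := (hV.subset (Set.sdiff_subset.trans hYV)).biUnion hfin
  have hgood : ∀ c ∈ s \ F, ∃ x ∈ X, IsLeast ((f · c) '' V) (f x c) := by
    rintro c ⟨hc, hcF⟩
    obtain ⟨y, hyY, hy⟩ := hY c hc
    by_cases hyX : y ∈ X
    · exact ⟨y, hyX, hy⟩
    · exact (hcF (Set.mem_biUnion (x := y) ⟨hyY, hyX⟩ ⟨hc, hy⟩)).elim
  intro b hb
  have hsF : s \ F ∈ 𝓝[≠] b :=
    nhdsNE_of_nhdsNE_sdiff_finite (mem_nhdsWithin_of_mem_nhds (hs.mem_nhds hb)) hF.to_subtype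
  refine exists_isLeast_of_frequently (hV.subset (hXY.trans hYV)) (hXY.trans hYV)
    (fun v hv => hf v hv b hb) ?_
  exact ((eventually_of_mem hsF hgood).frequently).filter_mono nhdsWithin_le_nhds

end Minimizers

lemma Vset_finite (N n : ℕ) : (Vset N n).Finite := by
  refine (Set.finite_Icc 0 fun _ => Nat.fib n).subset ?_
  rintro x ⟨hx, -⟩
  refine ⟨fun i => Nat.zero_le _, fun i => ?_⟩
  calc x i ≤ x i * Nat.fib (i + 1) := Nat.le_mul_of_pos_right _ (Nat.fib_pos.mpr i.succ_pos)
    _ ≤ ∑ j, x j * Nat.fib ((j : ℕ) + 1) :=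
      Finset.single_le_sum (f := fun j => x j * Nat.fib ((j : ℕ) + 1))
        (fun _ _ => Nat.zero_le _) (Finset.mem_univ i)
    _ = Nat.fib n := hx

lemma continuousAt_fmeas (N p q : ℕ) (x : Fin N → ℕ) {t : ℝ} (ht : 0 < t) :
    ContinuousAt (fmeas N p q x) t := by
  have hsum : ContinuousAt (fun s : ℝ => ∑ i, (x i : ℝ) * mmax p q ((i : ℕ) + 1) ^ s) t :=
    tendsto_finsetSum _ fun i _ => continuousAt_const.mul (continuousAt_const_rpow' ht.ne')
  exact hsum.rpow (continuousAt_const.div continuousAt_id ht.ne') (Or.inr (one_div_pos.mpr ht))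

theorem stmt11_general (N p q n : ℕ)
    (X Y : Set (Fin N → ℕ)) (hXY : X ⊆ Y) (hYV : Y ⊆ Vset N n)
    (hfin : ∀ z ∈ Y \ X,
      {t : ℝ | 0 < t ∧
        IsLeast ((fun x => fmeas N p q x t) '' Vset N n) (fmeas N p q z t)}.Finite)
    (hY : ∀ t : ℝ, 0 < t → ∃ m : ℝ,
      IsLeast ((fun x => fmeas N p q x t) '' Y) m ∧
      IsLeast ((fun x => fmeas N p q x t) '' Vset N n) m) :
    ∀ t : ℝ, 0 < t →
      (∃ x ∈ X, IsLeast ((fun x' => fmeas N p q x' t) '' Vset N n) (fmeas N p q x t)) ∧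
      ∃ m : ℝ, IsLeast ((fun x => fmeas N p q x t) '' X) m ∧
        IsLeast ((fun x => fmeas N p q x t) '' Vset N n) m := by
  have hYmin : ∀ t ∈ Set.Ioi (0 : ℝ), ∃ y ∈ Y,
      IsLeast ((fun x => fmeas N p q x t) '' Vset N n) (fmeas N p q y t) := by
    intro t ht
    obtain ⟨m, ⟨⟨y, hyY, rfl⟩, -⟩, hm⟩ := hY t ht
    exact ⟨y, hyY, hm⟩
  intro t ht
  obtain ⟨x, hxX, hx⟩ := exists_isLeast_of_finite_exceptions (Vset_finite N n) hXY hYV isOpen_Ioi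
    (fun v _ t ht => continuousAt_fmeas N p q v ht) hfin hYmin t ht
  exact ⟨⟨x, hxX, hx⟩, fmeas N p q x t,
    ⟨⟨x, hxX, rfl⟩, lowerBounds_mono_set (Set.image_mono (hXY.trans hYV)) hx.2⟩, hx⟩

/-- Lemma `InfAttainSet`: for `N ≥ 3`, primes `p,q` satisfying (W) and
`1 ≤ n ≤ N`, suppose `X ⊆ Y ⊆ V_n` and for each `z ∈ Y \ X` the set of `t > 0` where
`f_z(t)` attains `min{f_x(t) : x ∈ V_n}` is finite.  If the minimum over `Y` equals the
minimum over `V_n` for all `t > 0`, then for every `t > 0` some `x ∈ X` attains the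
minimum over `V_n`; in particular the minimum over `X` equals the minimum over `V_n`. -/
theorem stmt11 (N p q n : ℕ) (hN : 3 ≤ N) (hp : p.Prime) (hq : q.Prime) (hW : CondW N p q)
    (h1n : 1 ≤ n) (hnN : n ≤ N)
    (X Y : Set (Fin N → ℕ)) (hXY : X ⊆ Y) (hYV : Y ⊆ Vset N n)
    (hfin : ∀ z ∈ Y \ X,
      {t : ℝ | 0 < t ∧
        IsLeast ((fun x => fmeas N p q x t) '' Vset N n) (fmeas N p q z t)}.Finite)
    (hY : ∀ t : ℝ, 0 < t → ∃ m : ℝ,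
      IsLeast ((fun x => fmeas N p q x t) '' Y) m ∧
      IsLeast ((fun x => fmeas N p q x t) '' Vset N n) m) :
    ∀ t : ℝ, 0 < t →
      (∃ x ∈ X, IsLeast ((fun x' => fmeas N p q x' t) '' Vset N n) (fmeas N p q x t)) ∧
      ∃ m : ℝ, IsLeast ((fun x => fmeas N p q x t) '' X) m ∧
        IsLeast ((fun x => fmeas N p q x t) '' Vset N n) m :=
  stmt11_general N p q n X Y hXY hYV hfin hY
end

section
/- Let N ≥ 3 be an integer, let p, q be primes satisfying condition (W), and let n be an integer with 1 ≤ n ≤ N. If z ∈ V_n and (x^(1),…,x^(K)) is a factorization of z with x^(k) ∈ V_{i_k}, then U_z ⊆ ∩_{k=1}^K U_{x^(k)}, where for x ∈ V_j the infimum attaining set is U_x = {t ∈ (0,∞) : f_x(t) = min{f_y(t) : y ∈ V_j}}. -/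
open Real

/-!
Write `f_x(t) = S_t(x)^{1/t}` with `S_t(x) = Σ_i x_i m_i^t`, which is additive in `x` and, for
`t > 0`, ordered like `f_x(t)`. If `z = w + x` with `x ∈ V_j`, then replacing `x` by any
`y ∈ V_j` keeps `w + y` in `V_n`, since `V_j` is cut out by two linear equations. So at a
`t ∈ U_z` minimality of `z` gives `S_t(w) + S_t(x) ≤ S_t(w) + S_t(y)`, i.e. `t ∈ U_x`.
-/

open Finset

noncomputable def mmaxPowSum (N p q : ℕ) (t : ℝ) (x : Fin N → ℕ) : ℝ :=
  ∑ i, (x i : ℝ) * mmax p q ((i : ℕ) + 1) ^ t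

lemma mmax_nonneg (p q n : ℕ) : 0 ≤ mmax p q n :=
  le_max_of_le_left (mul_nonneg (Nat.cast_nonneg _) (Real.log_natCast_nonneg p))

lemma mmaxPowSum_nonneg (N p q : ℕ) (t : ℝ) (x : Fin N → ℕ) : 0 ≤ mmaxPowSum N p q t x :=
  sum_nonneg fun _ _ => mul_nonneg (Nat.cast_nonneg _) (Real.rpow_nonneg (mmax_nonneg _ _ _) t)

lemma mmaxPowSum_add (N p q : ℕ) (t : ℝ) (x y : Fin N → ℕ) :
    mmaxPowSum N p q t (x + y) = mmaxPowSum N p q t x + mmaxPowSum N p q t y := by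
  simp only [mmaxPowSum, Pi.add_apply, Nat.cast_add, add_mul, sum_add_distrib]

lemma fmeas_le_fmeas_iff {N p q : ℕ} {t : ℝ} (ht : 0 < t) (x y : Fin N → ℕ) :
    fmeas N p q x t ≤ fmeas N p q y t ↔ mmaxPowSum N p q t x ≤ mmaxPowSum N p q t y :=
  Real.rpow_le_rpow_iff (mmaxPowSum_nonneg _ _ _ _ _) (mmaxPowSum_nonneg _ _ _ _ _)
    (one_div_pos.mpr ht)

lemma sum_add_apply_mul {ι R : Type*} [Fintype ι] [Semiring R] (w x c : ι → R) :
    ∑ i, (w + x) i * c i = ∑ i, w i * c i + ∑ i, x i * c i := by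
  simp only [Pi.add_apply, add_mul, sum_add_distrib]

lemma add_mem_Vset_of_exchange {N n j : ℕ} {w x y : Fin N → ℕ} (hwx : w + x ∈ Vset N n)
    (hx : x ∈ Vset N j) (hy : y ∈ Vset N j) : w + y ∈ Vset N n := by
  obtain ⟨hwx₁, hwx₂⟩ := hwx
  rw [sum_add_apply_mul, hx.1] at hwx₁
  rw [sum_add_apply_mul, hx.2] at hwx₂
  exact ⟨by rw [sum_add_apply_mul, hy.1, hwx₁], by rw [sum_add_apply_mul, hy.2, hwx₂]⟩

lemma mem_Uset_of_add {N p q n j : ℕ} {w x : Fin N → ℕ} {t : ℝ} (hwx : w + x ∈ Vset N n)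
    (hx : x ∈ Vset N j) (ht : t ∈ Uset N p q n (w + x)) : t ∈ Uset N p q j x := by
  obtain ⟨ht0, -, hmin⟩ := ht
  refine ⟨ht0, ⟨x, hx, rfl⟩, ?_⟩
  rintro _ ⟨y, hy, rfl⟩
  have hle := (fmeas_le_fmeas_iff ht0 _ _).mp
    (hmin ⟨w + y, add_mem_Vset_of_exchange hwx hx hy, rfl⟩)
  rw [mmaxPowSum_add, mmaxPowSum_add] at hle
  exact (fmeas_le_fmeas_iff ht0 x y).mpr (by linarith)

theorem stmt12_general (N p q n : ℕ) (z : Fin N → ℕ) (hz : z ∈ Vset N n)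
    (K : ℕ) (idx : Fin K → ℕ) (x : Fin K → Fin N → ℕ)
    (hfac : IsFactorization N n z idx x) :
    Uset N p q n z ⊆ ⋂ k : Fin K, Uset N p q (idx k) (x k) := by
  obtain ⟨hx, rfl⟩ := hfac
  intro t ht
  refine Set.mem_iInter.mpr fun k => ?_
  have hsplit : ∑ j ∈ univ.erase k, x j + x k = ∑ j, x j := sum_erase_add _ _ (mem_univ k)
  rw [← hsplit] at hz ht
  exact mem_Uset_of_add hz (hx k).2.2 ht

/-- Lemma `FactorizationLemma`: for `N ≥ 3`, primes `p,q` satisfying (W),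
`1 ≤ n ≤ N`, `z ∈ V_n` and a factorization `(x^(1),…,x^(K))` of `z` with `x^(k) ∈ V_{idx k}`,
we have `U_z ⊆ ∩_k U_{x^(k)}`. -/
theorem stmt12 (N p q n : ℕ) (hN : 3 ≤ N) (hp : p.Prime) (hq : q.Prime) (hW : CondW N p q)
    (h1n : 1 ≤ n) (hnN : n ≤ N) (z : Fin N → ℕ) (hz : z ∈ Vset N n)
    (K : ℕ) (idx : Fin K → ℕ) (x : Fin K → Fin N → ℕ)
    (hfac : IsFactorization N n z idx x) :
    Uset N p q n z ⊆ ⋂ k : Fin K, Uset N p q (idx k) (x k) :=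
  stmt12_general N p q n z hz K idx x hfac
end

section
/- Let N ≥ 3 and let n be an integer with 1 ≤ n ≤ N, and suppose z ∈ C_n∖S_n. Then z ∉ R_n if and only if there exist an integer i with 1 ≤ i < n and a vector x ∈ R_i∖S_i such that all entries of z − x are non-negative. -/
open Real

/-!
A non-trivial factorization of `z` that is not `S`-type has a component `w ∈ V_m \ S_m` with
`w ≤ z`, and `m < n`: a component in `V_n` below `z` equals `z` (both weighted sums agree), which
leaves nothing for the other components. Iterating on `w` by strong induction on `m` ends at an
`S`-restricted vector, and it is almost consecutive-free because `z` is. Conversely, for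
`x ∈ V_i \ S_i` with `x ≤ z`, writing `z - x` as a sum of unit vectors `e_j ∈ V_{j+1}` gives a
non-trivial factorization of `z` whose component `x` lies in no `S_{i'}`, since the index of a
vector in `V` is determined by the vector.
-/

section Factorization

variable {N : ℕ}

lemma sum_mul_fib_add_two_of_mem_Vset {n : ℕ} (hn : 1 ≤ n) {x : Fin N → ℕ}
    (hx : x ∈ Vset N n) : ∑ i, x i * Nat.fib ((i : ℕ) + 2) = Nat.fib (n + 1) := by
  obtain ⟨k, rfl⟩ : ∃ k, n = k + 1 := ⟨n - 1, by omega⟩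
  calc ∑ i, x i * Nat.fib ((i : ℕ) + 2)
      = ∑ i, x i * Nat.fib (i : ℕ) + ∑ i, x i * Nat.fib ((i : ℕ) + 1) := by
        simp only [Nat.fib_add_two, mul_add, Finset.sum_add_distrib]
    _ = Nat.fib (k + 1 + 1) := by
        rw [hx.1, hx.2, Nat.add_sub_cancel, Nat.fib_add_two]

lemma Vset_index_eq {a b : ℕ} (ha : 1 ≤ a) (hb : 1 ≤ b) {x : Fin N → ℕ}
    (hxa : x ∈ Vset N a) (hxb : x ∈ Vset N b) : a = b := by
  have h := (sum_mul_fib_add_two_of_mem_Vset ha hxa).symm.trans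
    (sum_mul_fib_add_two_of_mem_Vset hb hxb)
  rw [show a + 1 = a - 1 + 2 by omega, show b + 1 = b - 1 + 2 by omega] at h
  have := Nat.fib_add_two_strictMono.injective h
  omega

lemma add_one_le_of_mem_Vset {n : ℕ} (hn : 1 ≤ n) {x : Fin N → ℕ} (hx : x ∈ Vset N n)
    {j : Fin N} (hj : x j ≠ 0) : (j : ℕ) + 1 ≤ n := by
  have h : Nat.fib ((j : ℕ) + 2) ≤ Nat.fib (n - 1 + 2) :=
    calc Nat.fib ((j : ℕ) + 2) ≤ x j * Nat.fib ((j : ℕ) + 2) :=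
          Nat.le_mul_of_pos_left _ (Nat.pos_of_ne_zero hj)
      _ ≤ ∑ i, x i * Nat.fib ((i : ℕ) + 2) :=
          Finset.single_le_sum (f := fun i : Fin N => x i * Nat.fib ((i : ℕ) + 2))
            (fun _ _ => Nat.zero_le _) (Finset.mem_univ j)
      _ = Nat.fib (n - 1 + 2) := by
          rw [sum_mul_fib_add_two_of_mem_Vset hn hx, show n - 1 + 2 = n + 1 by omega]
  have := Nat.fib_add_two_strictMono.le_iff_le.1 h
  omega

lemma ne_zero_of_mem_Vset {m : ℕ} (hm : 1 ≤ m) {x : Fin N → ℕ} (hx : x ∈ Vset N m) :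
    x ≠ 0 := by
  rintro rfl
  have h := hx.1
  simp only [Pi.zero_apply, zero_mul, Finset.sum_const_zero] at h
  have := Nat.fib_eq_zero.1 h.symm
  omega

lemma eq_of_le_of_mem_Vset {n : ℕ} {w z : Fin N → ℕ} (hw : w ∈ Vset N n) (hz : z ∈ Vset N n)
    (hwz : w ≤ z) : w = z := by
  have h := (Finset.sum_eq_sum_iff_of_le fun i _ => Nat.mul_le_mul_right _ (hwz i)).1
    (hw.1.trans hz.1.symm)
  funext j
  exact Nat.eq_of_mul_eq_mul_right (Nat.fib_pos.2 j.val.succ_pos) (h j (Finset.mem_univ j))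

lemma single_mem_Vset (j : Fin N) : (Pi.single j 1 : Fin N → ℕ) ∈ Vset N ((j : ℕ) + 1) := by
  simp [Vset, Pi.single_apply]

lemma xvec_eq_single_add_single {m p s : ℕ} (hm : m = p + s + 2) (hp : p + 1 < N) :
    xvec N m (p + 3) =
      Pi.single ⟨p, by omega⟩ (Nat.fib s) + Pi.single ⟨p + 1, hp⟩ (Nat.fib (s + 1)) := by
  funext j
  have e1 : m + 1 - (p + 3) = s := by omega
  have e2 : m + 2 - (p + 3) = s + 1 := by omega
  simp only [xvec, Pi.add_apply, Pi.single_apply, Fin.ext_iff, e1, e2]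
  split_ifs <;> omega

lemma xvec_mem_Vset_s15 {m i : ℕ} (hi : 3 ≤ i) (him : i ≤ m + 1) (hmN : m ≤ N) :
    xvec N m i ∈ Vset N m := by
  obtain ⟨p, rfl⟩ : ∃ p, i = p + 3 := ⟨i - 3, by omega⟩
  obtain ⟨s, rfl⟩ : ∃ s, m = p + s + 2 := ⟨m - (p + 2), by omega⟩
  rw [xvec_eq_single_add_single rfl (by omega)]
  constructor
  · simp only [Pi.add_apply, add_mul, Finset.sum_add_distrib, Pi.single_apply, ite_mul, zero_mul,
      Finset.sum_ite_eq', Finset.mem_univ, if_true]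
    rw [show p + s + 2 = s + (p + 1) + 1 by omega]
    exact (Nat.fib_add s (p + 1)).symm
  · simp only [Pi.add_apply, add_mul, Finset.sum_add_distrib, Pi.single_apply, ite_mul, zero_mul,
      Finset.sum_ite_eq', Finset.mem_univ, if_true]
    rw [show p + s + 2 - 1 = s + p + 1 by omega]
    exact (Nat.fib_add s p).symm

lemma Sset_subset_Vset {m : ℕ} (hm : 1 ≤ m) (hmN : m ≤ N) : Sset N m ⊆ Vset N m := by
  intro x hx
  unfold Sset at hx
  split_ifs at hx with h1
  · subst h1
    rw [Set.mem_singleton_iff.1 hx]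
    have hx0 : xvec N 1 2 = Pi.single ⟨0, by omega⟩ 1 := by
      funext j
      simp only [xvec, Pi.single_apply, Fin.ext_iff]
      split_ifs <;> simp_all
    simpa [hx0] using single_mem_Vset (⟨0, by omega⟩ : Fin N)
  · obtain ⟨i, hi, him, rfl⟩ := hx
    exact xvec_mem_Vset_s15 hi him hmN

lemma ACF.mono {z w : Fin N → ℕ} (hz : ACF N z) (hwz : w ≤ z) : ACF N w := by
  intro j hj hw i hi
  obtain ⟨hw₁, hw₂⟩ := Nat.mul_ne_zero_iff.1 hw
  have hz₁ : z j ≠ 0 := Nat.pos_iff_ne_zero.1 ((Nat.pos_of_ne_zero hw₁).trans_le (hwz j))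
  have hz₂ : z ⟨(j : ℕ) + 1, hj⟩ ≠ 0 :=
    Nat.pos_iff_ne_zero.1 ((Nat.pos_of_ne_zero hw₂).trans_le (hwz _))
  have hz' : z j * z ⟨(j : ℕ) + 1, hj⟩ ≠ 0 := Nat.mul_ne_zero hz₁ hz₂
  exact Nat.eq_zero_of_le_zero (hz j hj hz' i hi ▸ hwz i)

lemma SRestricted.exists_mem_Sset {n : ℕ} {z : Fin N → ℕ} (hz : SRestricted N n z)
    {ι : Type*} [Fintype ι] (idx : ι → ℕ) (x : ι → Fin N → ℕ)
    (hx : ∀ k, 1 ≤ idx k ∧ idx k ≤ n ∧ x k ∈ Vset N (idx k)) (hsum : z = ∑ k, x k)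
    (hcard : Fintype.card ι ≠ 1) (k : ι) : ∃ i, 1 ≤ i ∧ i ≤ n ∧ x k ∈ Sset N i := by
  let e := Fintype.equivFin ι
  simpa [e] using hz _ (idx ∘ e.symm) (x ∘ e.symm)
    ⟨fun k => hx _, hsum.trans (e.symm.sum_comp x).symm⟩ hcard (e k)

lemma exists_lt_of_not_SRestricted {n : ℕ} {z : Fin N → ℕ} (hz : z ∈ Vset N n)
    (h : ¬ SRestricted N n z) : ∃ m, 1 ≤ m ∧ m < n ∧ ∃ w ∈ Vset N m \ Sset N m, w ≤ z := by
  simp only [SRestricted, STypeFac, IsFactorization, not_forall, not_exists, not_and] at h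
  obtain ⟨K, idx, x, ⟨hx, hsum⟩, hK, k, hk⟩ := h
  obtain ⟨hk₁, hkn, hxk⟩ := hx k
  have hle : x k ≤ z :=
    hsum ▸ Finset.single_le_sum (fun _ _ _ => Nat.zero_le _) (Finset.mem_univ k)
  refine ⟨idx k, hk₁, lt_of_le_of_ne hkn fun hn => ?_, x k, ⟨hxk, hk _ hk₁ hkn⟩, hle⟩
  have : Nontrivial (Fin K) := Fin.nontrivial_iff_two_le.2 (by have := k.pos; omega)
  obtain ⟨k', hk'⟩ := exists_ne k
  have hxk_eq : x k = z := eq_of_le_of_mem_Vset (hn ▸ hxk) hz hle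
  have hpair : x k' + x k ≤ z := by
    rw [← Finset.sum_pair hk', hsum]
    exact Finset.sum_le_sum_of_subset (Finset.subset_univ _)
  rw [← hxk_eq] at hpair
  exact ne_zero_of_mem_Vset (hx k').1 (hx k').2.2 (funext fun j => by simpa using hpair j)

lemma exists_mem_Rset_le {z : Fin N → ℕ} (hz : ACF N z) {m : ℕ} (hm : 1 ≤ m)
    {w : Fin N → ℕ} (hw : w ∈ Vset N m \ Sset N m) (hwz : w ≤ z) :
    ∃ i, 1 ≤ i ∧ i ≤ m ∧ ∃ x ∈ Rset N i \ Sset N i, x ≤ z := by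
  induction m using Nat.strong_induction_on generalizing w with
  | _ m ih =>
    by_cases hsr : SRestricted N m w
    · exact ⟨m, hm, le_rfl, w, ⟨⟨⟨hw.1, hz.mono hwz⟩, hsr⟩, hw.2⟩, hwz⟩
    · obtain ⟨m', hm', hm'm, w', hw', hw'w⟩ := exists_lt_of_not_SRestricted hw.1 hsr
      obtain ⟨i, hi, him', x, hx, hxz⟩ := ih m' hm'm hm' hw' (hw'w.trans hwz)
      exact ⟨i, hi, him'.trans hm'm.le, x, hx, hxz⟩

lemma not_SRestricted_of_le {n i : ℕ} (hi : 1 ≤ i) (hin : i < n) (hnN : n ≤ N)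
    {z x : Fin N → ℕ} (hz : z ∈ Vset N n) (hx : x ∈ Vset N i \ Sset N i) (hxz : x ≤ z) :
    ¬ SRestricted N n z := by
  intro hsr
  set y := z - x
  have hzy : z = x + y := (add_tsub_cancel_of_le hxz).symm
  obtain ⟨j₀, hj₀⟩ : ∃ j, y j ≠ 0 := by
    by_contra! h
    have hzx : z = x := by rw [hzy, show y = 0 from funext h, add_zero]
    exact hin.ne' (Vset_index_eq (by omega) hi hz (hzx ▸ hx.1))
  let idx : Option (Σ j : Fin N, Fin (y j)) → ℕ := fun o => o.elim i fun p => p.1 + 1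
  let piece : Option (Σ j : Fin N, Fin (y j)) → Fin N → ℕ :=
    fun o => o.elim x fun p => Pi.single p.1 1
  have hpiece : ∀ k, 1 ≤ idx k ∧ idx k ≤ n ∧ piece k ∈ Vset N (idx k) := by
    rintro (_ | ⟨j, t⟩)
    · exact ⟨hi, hin.le, hx.1⟩
    · refine ⟨Nat.le_add_left _ _, add_one_le_of_mem_Vset (by omega) hz (j := j) ?_,
        single_mem_Vset j⟩
      have hzj : z j = x j + y j := congrFun hzy j
      have := t.pos
      omega
  have hsum : z = ∑ k, piece k := by
    rw [Fintype.sum_option, Fintype.sum_sigma]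
    simp only [piece, Option.elim, Finset.sum_const, Finset.card_univ, Fintype.card_fin,
      ← Pi.single_smul, smul_eq_mul, mul_one, Finset.univ_sum_single]
    exact hzy
  have hcard : Fintype.card (Option (Σ j : Fin N, Fin (y j))) ≠ 1 :=
    (Fintype.one_lt_card_iff.2 ⟨none, some ⟨j₀, ⟨0, Nat.pos_of_ne_zero hj₀⟩⟩, by simp⟩).ne'
  obtain ⟨i', hi', hi'n, hxS⟩ := hsr.exists_mem_Sset idx piece hpiece hsum hcard none
  have hii' := Vset_index_eq hi' hi (Sset_subset_Vset hi' (hi'n.trans hnN) hxS) hx.1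
  exact hx.2 (hii' ▸ hxS)

end Factorization

theorem stmt15_general (N n : ℕ) (hnN : n ≤ N)
    (z : Fin N → ℕ) (hz : z ∈ Cset N n \ Sset N n) :
    z ∉ Rset N n ↔
      ∃ i : ℕ, 1 ≤ i ∧ i < n ∧ ∃ x ∈ Rset N i \ Sset N i, ∀ j : Fin N, x j ≤ z j := by
  obtain ⟨⟨hzV, hzACF⟩, -⟩ := hz
  constructor
  · intro hzR
    obtain ⟨m, hm, hmn, w, hw, hwz⟩ :=
      exists_lt_of_not_SRestricted hzV fun h => hzR ⟨⟨hzV, hzACF⟩, h⟩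
    obtain ⟨i, hi, him, x, hx, hxz⟩ := exists_mem_Rset_le hzACF hm hw hwz
    exact ⟨i, hi, him.trans_lt hmn, x, hx, hxz⟩
  · rintro ⟨i, hi, hin, x, hx, hxz⟩ hzR
    exact not_SRestricted_of_le hi hin hnN hzV ⟨hx.1.1.1, hx.2⟩ hxz hzR.2

/-- Lemma `RestrictedComputations`: for `N ≥ 3`, `1 ≤ n ≤ N` and
`z ∈ C_n \ S_n`, we have `z ∉ R_n` if and only if there are `1 ≤ i < n` and
`x ∈ R_i \ S_i` such that all entries of `z − x` are non-negative (i.e. `x_j ≤ z_j`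
componentwise). -/
theorem stmt15 (N n : ℕ) (hN : 3 ≤ N) (h1n : 1 ≤ n) (hnN : n ≤ N)
    (z : Fin N → ℕ) (hz : z ∈ Cset N n \ Sset N n) :
    z ∉ Rset N n ↔
      ∃ i : ℕ, 1 ≤ i ∧ i < n ∧ ∃ x ∈ Rset N i \ Sset N i, ∀ j : Fin N, x j ≤ z j :=
  stmt15_general N n hnN z hz
end
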